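/- arXiv:2006.04743 — 3 statements merged into one kernel-verified Lean document; each statement's English description precedes it below -/
import Mathlib

section
/- Given any unambiguous configuration $(x, w)$ — points $x_1,\ldots,x_N \in \mathbb{R}^d$ with nonnegative integer weights $w_1,\ldots,w_N$ summing to $N$, such that for every nonnegative integer vector $f$ summing to $N+1$ the distances $|x_j - \frac{1}{N+1}\sum_i f_i x_i|$ are pairwise distinct over $j \in [N]$ — there exist $m \le (N-1)^2$ and a sequence $\ell_1,\ldots,\ell_m \in [N]$, valid for $(x,w)$ (each $\ell_i$ has positive weight when it branches), such that after applying the branching-and-killing dynamics the final weight vector $w^{(m)}$ has exactly one nonzero entry. -/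
open Finset

/-- The barycenter after the particle at site `ℓ` branches: total weight `N + 1`. -/
noncomputable def branchBary {d N : ℕ} (x : Fin N → EuclideanSpace ℝ (Fin d))
    (w : Fin N → ℕ) (ℓ : Fin N) : EuclideanSpace ℝ (Fin d) :=
  ((N : ℝ) + 1)⁻¹ • ((∑ i, (w i : ℝ) • x i) + x ℓ)

/-- A configuration is unambiguous if for every multiplicity vector `f` summing to
`N + 1`, the distances of the points to the corresponding barycenter are pairwise
distinct. -/
def Unambiguous {d N : ℕ} (x : Fin N → EuclideanSpace ℝ (Fin d)) : Prop :=
  ∀ f : Fin N → ℕ, (∑ i, f i) = N + 1 → ∀ j k : Fin N, j ≠ k →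
    ‖x j - ((N : ℝ) + 1)⁻¹ • ∑ i, (f i : ℝ) • x i‖ ≠
      ‖x k - ((N : ℝ) + 1)⁻¹ • ∑ i, (f i : ℝ) • x i‖

/-- `k` is the index killed when site `ℓ` branches: among the positive-weight sites,
`x k` is farthest from the post-branching barycenter. -/
def IsKilled {d N : ℕ} (x : Fin N → EuclideanSpace ℝ (Fin d)) (w : Fin N → ℕ)
    (ℓ k : Fin N) : Prop :=
  0 < w k ∧ ∀ j, 0 < w j → ‖x j - branchBary x w ℓ‖ ≤ ‖x k - branchBary x w ℓ‖

/-- One step of the branching-and-killing dynamics at site `ℓ`. -/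
def Step {d N : ℕ} (x : Fin N → EuclideanSpace ℝ (Fin d)) (w : Fin N → ℕ) (ℓ : Fin N)
    (w' : Fin N → ℕ) : Prop :=
  0 < w ℓ ∧ ∃ k, IsKilled x w ℓ k ∧
    w' = fun j => w j + (if j = ℓ then 1 else 0) - (if j = k then 1 else 0)

/-!
Let `b` be the barycenter of the current configuration and branch repeatedly at the occupied
site `ℓ` closest to `b`. Unambiguity forces the killed site `k` to differ from `ℓ`, and moving one
unit of mass from `k` to `ℓ` keeps `k` at least as far from the new barycenter as `ℓ`, so the next
branching at `ℓ` again kills some other site. Since the weight at `ℓ` grows by one each time, within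
`N - 1` steps some site dies. The support has at most `N` sites, so after at most `N - 1` such
phases a single site remains.
-/

section Geometry

variable {V : Type*} [NormedAddCommGroup V] [NormedSpace ℝ V]

theorem norm_sub_le_norm_sub_of_branch {p q b B : V} {n : ℝ} (hn : 0 ≤ n)
    (hB : (n + 1) • B = n • b + p) (h : ‖p - b‖ ≤ ‖q - b‖) : ‖p - B‖ ≤ ‖q - B‖ := by
  have hn₁ : 0 ≤ n + 1 := by linarith
  have hp : (n + 1) • (p - B) = n • (p - b) := by linear_combination (norm := module) -hB
  have hq : (n + 1) • (q - B) = (n + 1) • (q - b) - (p - b) := by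
    linear_combination (norm := module) -hB
  have hp' := congrArg norm hp
  have hq' := hq ▸ norm_sub_norm_le ((n + 1) • (q - b)) (p - b)
  rw [norm_smul_of_nonneg hn₁, norm_smul_of_nonneg hn] at hp'
  rw [norm_smul_of_nonneg hn₁, norm_smul_of_nonneg hn₁] at hq'
  refine le_of_mul_le_mul_left ?_ (by linarith : (0 : ℝ) < n + 1)
  nlinarith [norm_nonneg (p - b)]

theorem norm_sub_le_norm_sub_of_transfer {p q b B b' : V} {n : ℝ} (hn : 1 ≤ n)
    (hB : (n + 1) • B = n • b + p) (hb' : n • b' = n • b + p - q)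
    (h : ‖p - B‖ ≤ ‖q - B‖) : ‖p - b'‖ ≤ ‖q - b'‖ := by
  have hn₀ : 0 ≤ n := by linarith
  have hn₁ : 0 ≤ n + 1 := by linarith
  set a := p - b
  set c := (n - 1) • a + (q - b)
  set D := (n + 1) • (q - b) - a
  have hpB : ‖(n + 1) • (p - B)‖ = ‖n • a‖ := by
    congr 1; linear_combination (norm := module) -hB
  have hqB : ‖(n + 1) • (q - B)‖ = ‖D‖ := by
    congr 1; linear_combination (norm := module) -hB
  have hp : ‖n • (p - b')‖ = ‖c‖ := by
    congr 1; linear_combination (norm := module) -hb'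
  have hq : ‖n • (q - b')‖ = ‖D‖ := by
    congr 1; linear_combination (norm := module) -hb'
  -- `(n + 1) • c = n ^ 2 • a + D`, so `n ‖a‖ ≤ ‖D‖` gives `‖c‖ ≤ ‖D‖`.
  have hc : (n + 1) * ‖c‖ ≤ n * n * ‖a‖ + ‖D‖ := by
    calc (n + 1) * ‖c‖ = ‖(n * n) • a + D‖ := by
          rw [← norm_smul_of_nonneg hn₁]; congr 1; module
      _ ≤ n * n * ‖a‖ + ‖D‖ := by
          refine (norm_add_le _ _).trans_eq ?_
          rw [norm_smul_of_nonneg (by positivity)]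
  simp only [norm_smul_of_nonneg hn₀, norm_smul_of_nonneg hn₁] at hpB hqB hp hq
  have haD : n * ‖a‖ ≤ ‖D‖ := by nlinarith
  have hcD : ‖c‖ ≤ ‖D‖ := by nlinarith [norm_nonneg a]
  refine le_of_mul_le_mul_left ?_ (by linarith : (0 : ℝ) < n)
  linarith

end Geometry

section Path

variable {α β : Type*} {r : α → β → α → Prop}

inductive LabelledPath (r : α → β → α → Prop) : ℕ → α → α → Prop
  | refl (a : α) : LabelledPath r 0 a a
  | head {n : ℕ} {a b c : α} (l : β) :
      r a l b → LabelledPath r n b c → LabelledPath r (n + 1) a c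

namespace LabelledPath

theorem trans {m n : ℕ} {a b c : α} (hab : LabelledPath r m a b) (hbc : LabelledPath r n b c) :
    LabelledPath r (m + n) a c := by
  induction hab with
  | refl => simpa using hbc
  | head l h _ ih => simpa only [Nat.add_right_comm] using head l h (ih hbc)

theorem eq_of_invariant {γ : Type*} (f : α → γ) (hf : ∀ a l b, r a l b → f b = f a) {n : ℕ}
    {a b : α} (hab : LabelledPath r n a b) : f b = f a := by
  induction hab with
  | refl => rfl
  | head l h _ ih => exact ih.trans (hf _ _ _ h)

theorem exists_seq [Nonempty β] {n : ℕ} {a b : α} (hab : LabelledPath r n a b) :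
    ∃ ls : ℕ → β, ∃ as : ℕ → α, as 0 = a ∧ (∀ i < n, r (as i) (ls i) (as (i + 1))) ∧
      as n = b := by
  induction hab with
  | refl a => exact ⟨fun _ => Classical.arbitrary β, fun _ => a, rfl, by simp, rfl⟩
  | @head n a b c l h _ ih =>
    obtain ⟨ls, as, h0, hr, hn⟩ := ih
    refine ⟨fun | 0 => l | i + 1 => ls i, fun | 0 => a | i + 1 => as i, rfl, ?_, hn⟩
    rintro (_ | i) hi
    · simpa [h0] using h
    · exact hr i (by omega)

end LabelledPath

end Path

noncomputable def bary {E : Type*} [AddCommGroup E] [Module ℝ E] {N : ℕ} (x : Fin N → E)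
    (w : Fin N → ℕ) : E :=
  (N : ℝ)⁻¹ • ∑ i, (w i : ℝ) • x i

def transfer {N : ℕ} (w : Fin N → ℕ) (ℓ k : Fin N) : Fin N → ℕ :=
  fun j => w j + (if j = ℓ then 1 else 0) - (if j = k then 1 else 0)

def occupied {N : ℕ} (w : Fin N → ℕ) : Finset (Fin N) :=
  univ.filter (0 < w ·)

section Weights

variable {N : ℕ} {w : Fin N → ℕ} {ℓ k : Fin N}

theorem transfer_cast {R : Type*} [AddGroupWithOne R] (hk : 0 < w k) (j : Fin N) :
    ((transfer w ℓ k j : ℕ) : R) = w j + (if j = ℓ then 1 else 0) - (if j = k then 1 else 0) := by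
  have : (if j = k then 1 else 0) ≤ w j + (if j = ℓ then 1 else 0) := by
    split_ifs <;> subst_vars <;> omega
  rw [transfer, Nat.cast_sub this]
  push_cast
  rfl

theorem sum_transfer (hk : 0 < w k) : ∑ j, transfer w ℓ k j = ∑ j, w j := by
  apply Nat.cast_injective (R := ℤ)
  simp [transfer_cast hk, sum_sub_distrib, sum_add_distrib]

theorem sum_smul_transfer {E : Type*} [AddCommGroup E] [Module ℝ E] (x : Fin N → E)
    (hk : 0 < w k) :
    ∑ j, (transfer w ℓ k j : ℝ) • x j = ∑ j, (w j : ℝ) • x j + x ℓ - x k := by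
  simp [transfer_cast hk, sub_smul, add_smul, ite_smul, sum_sub_distrib, sum_add_distrib]

theorem smul_bary {E : Type*} [AddCommGroup E] [Module ℝ E] (hN : N ≠ 0) (x : Fin N → E) :
    (N : ℝ) • bary x w = ∑ i, (w i : ℝ) • x i :=
  smul_inv_smul₀ (Nat.cast_ne_zero.mpr hN) _

theorem transfer_apply_left (hkℓ : k ≠ ℓ) : transfer w ℓ k ℓ = w ℓ + 1 := by
  simp [transfer, hkℓ.symm]

theorem transfer_apply_right (hkℓ : k ≠ ℓ) : transfer w ℓ k k = w k - 1 := by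
  simp [transfer, hkℓ]

theorem transfer_pos_iff_of_ne {j : Fin N} (hℓ : 0 < w ℓ) (hjk : j ≠ k) :
    0 < transfer w ℓ k j ↔ 0 < w j := by
  by_cases hjℓ : j = ℓ
  · subst hjℓ
    simp [transfer, hjk, hℓ]
  · simp [transfer, hjk, hjℓ]

theorem occupied_transfer_of_one_lt (hℓ : 0 < w ℓ) (hk : 1 < w k) :
    occupied (transfer w ℓ k) = occupied w := by
  ext j
  simp only [occupied, mem_filter, mem_univ, true_and]
  by_cases hjk : j = k
  · subst hjk
    simp only [transfer, if_true]
    split_ifs <;> omega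
  · exact transfer_pos_iff_of_ne hℓ hjk

theorem card_occupied_transfer_lt (hℓ : 0 < w ℓ) (hkℓ : k ≠ ℓ) (hk : w k = 1) :
    #(occupied (transfer w ℓ k)) < #(occupied w) := by
  have h : occupied (transfer w ℓ k) = (occupied w).erase k := by
    ext j
    simp only [occupied, mem_filter, mem_erase, mem_univ, true_and]
    by_cases hjk : j = k
    · subst hjk
      simp [transfer, hkℓ, hk]
    · simp [hjk, transfer_pos_iff_of_ne hℓ hjk]
  rw [h]
  exact card_erase_lt_of_mem (by simp [occupied, hk])

theorem existsUnique_ne_zero_of_card_occupied_le_one (hw : ∑ i, w i ≠ 0)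
    (h : #(occupied w) ≤ 1) : ∃! j, w j ≠ 0 := by
  obtain ⟨j, -, hj⟩ := exists_ne_zero_of_sum_ne_zero hw
  refine ⟨j, hj, fun i hi => card_le_one.mp h i ?_ j ?_⟩ <;> simp [occupied, Nat.pos_iff_ne_zero, *]

end Weights

section Dynamics

variable {d N : ℕ} {x : Fin N → EuclideanSpace ℝ (Fin d)} {w : Fin N → ℕ} {ℓ k j : Fin N}

theorem branchBary_eq_smul_sum (x : Fin N → EuclideanSpace ℝ (Fin d)) (w : Fin N → ℕ)
    (ℓ : Fin N) :
    branchBary x w ℓ = ((N : ℝ) + 1)⁻¹ • ∑ i, ((w i + if i = ℓ then 1 else 0 : ℕ) : ℝ) • x i := by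
  simp [branchBary, add_smul, ite_smul, sum_add_distrib]

theorem smul_branchBary_eq (hN : N ≠ 0) (x : Fin N → EuclideanSpace ℝ (Fin d))
    (w : Fin N → ℕ) (ℓ : Fin N) :
    ((N : ℝ) + 1) • branchBary x w ℓ = (N : ℝ) • bary x w + x ℓ := by
  rw [branchBary, smul_inv_smul₀ (by positivity), smul_bary hN]

theorem exists_isKilled (hℓ : 0 < w ℓ) : ∃ k, IsKilled x w ℓ k := by
  obtain ⟨k, hk, hmax⟩ := exists_max_image (occupied w) (‖x · - branchBary x w ℓ‖)
    ⟨ℓ, by simpa [occupied] using hℓ⟩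
  exact ⟨k, by simpa [occupied] using hk, fun j hj => hmax j (by simpa [occupied] using hj)⟩

theorem IsKilled.norm_sub_lt (hU : Unambiguous x) (hw : ∑ i, w i = N)
    (hk : IsKilled x w ℓ k) (hj : 0 < w j) (hjk : j ≠ k) :
    ‖x j - branchBary x w ℓ‖ < ‖x k - branchBary x w ℓ‖ := by
  refine (hk.2 j hj).lt_of_ne ?_
  rw [branchBary_eq_smul_sum]
  exact hU _ (by simp [sum_add_distrib, hw]) j k hjk

theorem IsKilled.ne_of_norm_sub_bary_le (hN : N ≠ 0) (hU : Unambiguous x) (hw : ∑ i, w i = N)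
    (hk : IsKilled x w ℓ k) (hj : 0 < w j) (hjℓ : j ≠ ℓ)
    (hclose : ‖x ℓ - bary x w‖ ≤ ‖x j - bary x w‖) : k ≠ ℓ := by
  rintro rfl
  have := norm_sub_le_norm_sub_of_branch (Nat.cast_nonneg N) (smul_branchBary_eq hN x w k) hclose
  exact (hk.norm_sub_lt hU hw hj hjℓ).not_ge this

theorem IsKilled.norm_sub_bary_transfer_le (hN : N ≠ 0) (hk : IsKilled x w ℓ k)
    (hℓ : 0 < w ℓ) :
    ‖x ℓ - bary x (transfer w ℓ k)‖ ≤ ‖x k - bary x (transfer w ℓ k)‖ := by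
  refine norm_sub_le_norm_sub_of_transfer (Nat.one_le_cast.mpr (Nat.pos_of_ne_zero hN))
    (smul_branchBary_eq hN x w ℓ) ?_ (hk.2 ℓ hℓ)
  rw [smul_bary hN, smul_bary hN, sum_smul_transfer x hk.1]

theorem Step.sum_eq {w' : Fin N → ℕ} (h : Step x w ℓ w') : ∑ i, w' i = ∑ i, w i := by
  obtain ⟨-, k, hk, rfl⟩ := h
  exact sum_transfer hk.1

theorem exists_path_card_occupied_lt (hN : N ≠ 0) (hU : Unambiguous x) (hw : ∑ i, w i = N)
    (hℓ : 0 < w ℓ) (hj : 0 < w j) (hjℓ : j ≠ ℓ)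
    (hclose : ‖x ℓ - bary x w‖ ≤ ‖x j - bary x w‖) :
    ∃ m ≤ N - w ℓ, ∃ w', LabelledPath (Step x) m w w' ∧ #(occupied w') < #(occupied w) := by
  generalize hT : N - w ℓ = T
  induction T generalizing w j with
  | zero =>
    have := add_le_sum (fun i _ => Nat.zero_le (w i)) (mem_univ ℓ) (mem_univ j) hjℓ.symm
    omega
  | succ T ih =>
    obtain ⟨k, hk⟩ := exists_isKilled (x := x) hℓ
    have hkℓ : k ≠ ℓ := hk.ne_of_norm_sub_bary_le hN hU hw hj hjℓ hclose
    have hstep : Step x w ℓ (transfer w ℓ k) := ⟨hℓ, k, hk, rfl⟩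
    rcases (Nat.one_le_iff_ne_zero.mpr hk.1.ne').eq_or_lt with hk1 | hk1
    · exact ⟨1, by omega, _, .head ℓ hstep (.refl _),
        card_occupied_transfer_lt hℓ hkℓ hk1.symm⟩
    · have hℓ' := transfer_apply_left (w := w) hkℓ
      obtain ⟨m, hm, w', hpath, hcard⟩ := ih (w := transfer w ℓ k) (j := k)
        (hw := (sum_transfer hk.1).trans hw) (hℓ := by omega)
        (hj := by rw [transfer_apply_right hkℓ]; omega) (hjℓ := hkℓ)
        (hclose := hk.norm_sub_bary_transfer_le hN hℓ) (hT := by omega)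
      exact ⟨m + 1, by omega, w', .head ℓ hstep hpath,
        occupied_transfer_of_one_lt hℓ hk1 ▸ hcard⟩

theorem exists_path_existsUnique_ne_zero (hN : N ≠ 0) (hU : Unambiguous x) {s : ℕ}
    (hw : ∑ i, w i = N) (hs : #(occupied w) ≤ s + 1) :
    ∃ m ≤ s * (N - 1), ∃ w', LabelledPath (Step x) m w w' ∧ ∃! j, w' j ≠ 0 := by
  induction s generalizing w with
  | zero =>
    exact ⟨0, Nat.zero_le _, w, .refl w,
      existsUnique_ne_zero_of_card_occupied_le_one (hw.trans_ne hN) hs⟩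
  | succ s ih =>
    by_cases h1 : #(occupied w) ≤ 1
    · exact ⟨0, Nat.zero_le _, w, .refl w,
        existsUnique_ne_zero_of_card_occupied_le_one (hw.trans_ne hN) h1⟩
    obtain ⟨ℓ, hℓ, hmin⟩ := exists_min_image (occupied w) (‖x · - bary x w‖)
      (card_pos.mp (by omega))
    obtain ⟨j, hj, hjℓ⟩ := exists_mem_ne (by omega : 1 < #(occupied w)) ℓ
    have hclose := hmin j hj
    simp only [occupied, mem_filter, mem_univ, true_and] at hℓ hj
    obtain ⟨m₁, hm₁, w₁, hpath₁, hcard₁⟩ := exists_path_card_occupied_lt hN hU hw hℓ hj hjℓ hclose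
    have hw₁ : ∑ i, w₁ i = N :=
      hpath₁.eq_of_invariant (fun w => ∑ i, w i) (fun _ _ _ h => h.sum_eq) ▸ hw
    obtain ⟨m₂, hm₂, w₂, hpath₂, hw₂⟩ := ih hw₁ (by omega)
    refine ⟨m₁ + m₂, ?_, w₂, hpath₁.trans hpath₂, hw₂⟩
    rw [add_one_mul]
    omega

end Dynamics

theorem stmt14 {d N : ℕ} (hN : 0 < N) (x : Fin N → EuclideanSpace ℝ (Fin d))
    (w : Fin N → ℕ) (hw : ∑ i, w i = N) (hU : Unambiguous x) :
    ∃ m ≤ (N - 1) ^ 2, ∃ ℓs : ℕ → Fin N, ∃ ws : ℕ → Fin N → ℕ,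
      ws 0 = w ∧ (∀ i < m, Step x (ws i) (ℓs i) (ws (i + 1))) ∧
        ∃! j : Fin N, ws m j ≠ 0 := by
  have : Nonempty (Fin N) := ⟨⟨0, hN⟩⟩
  have hcard : #(occupied w) ≤ (N - 1) + 1 :=
    (card_le_univ _).trans (by simp only [Fintype.card_fin]; omega)
  obtain ⟨m, hm, w', hpath, hw'⟩ := exists_path_existsUnique_ne_zero hN.ne' hU hw hcard
  obtain ⟨ℓs, ws, h0, hsteps, hm'⟩ := hpath.exists_seq
  exact ⟨m, sq (N - 1) ▸ hm, ℓs, ws, h0, hsteps, hm' ▸ hw'⟩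
end

section
/- Let $N \ge 3$, $r_N = \frac{1}{4(N+1)}$, and $\gamma = 0$ if $N$ is odd, $\gamma = -\frac{5}{N-1}e_1$ if $N$ is even. Suppose $x \in (\mathbb{R}^d)^N$ admits a partition $[N] = G \sqcup C \sqcup D$ with $C \neq \emptyset$, $G \sqcup D \neq \emptyset$, $x_i \in B(\gamma, 2r_N)$ for $i \in C$, $x_j \in B(-5e_1, 2r_N)$ for $j \in G$, $x_j \in B(5e_1, 2r_N)$ for $j \in D$, $|G \cup C| \ge \lceil (N-1)/2 \rceil + 1$, and $|D \cup C| \ge \lfloor (N-1)/2 \rfloor + 1$. Then for any $\ell \in C$, letting $\bar{x}^{N+1} = \frac{1}{N+1}(\sum_{i=1}^N x_i + x_\ell)$, the index maximizing $|x_j - \bar{x}^{N+1}|$ over $j \in [N]$ lies in $G \sqcup D$. -/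
/-
Every point lies within `2 r_N` of a model configuration on the line `ℝ e₁`: `-5`, `γ₁` or `5`
according to its cluster, where `γ = γ₁ e₁`. The barycenter after branching is an average, so
it stays within `2 r_N` of the model barycenter `μ e₁`, where
`(N + 1) μ = 5 |D| - 5 |G| + (|C| + 1) γ₁`.
Hence a point of `C` is at distance less than `|γ₁ - μ| + 4 r_N` from it, and a point of `D`
(of `G` if `D` is empty) at distance more than `|±5 - μ| - 4 r_N`. The cardinality bounds and
`-5 / (N - 1) ≤ γ₁ ≤ 0` give the scalar gap `|γ₁ - μ| + 8 r_N ≤ |±5 - μ|`, so no point of `C`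
is farthest.
-/

open Finset

lemma dist_smul_smul_right {E : Type*} [SeminormedAddCommGroup E] [NormedSpace ℝ E]
    (a b : ℝ) (v : E) :
    dist (a • v) (b • v) = |a - b| * ‖v‖ := by
  rw [dist_eq_norm, ← sub_smul, norm_smul, Real.norm_eq_abs]

lemma dist_lt_dist_of_near {X : Type*} [PseudoMetricSpace X] {x x' p p' b q : X} {r : ℝ}
    (hx : dist x p < r) (hx' : dist x' p' < r) (hb : dist b q < r)
    (hgap : dist p q + 4 * r ≤ dist p' q) : dist x b < dist x' b := by
  have h₁ := dist_triangle4 x p q b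
  have h₂ := dist_triangle4 p' x' b q
  rw [dist_comm q b] at h₁
  rw [dist_comm p' x'] at h₂
  linarith

section Barycenter

variable {E : Type*} [SeminormedAddCommGroup E] [NormedSpace ℝ E] {N : ℕ}

noncomputable def branchBarycenter {M : Type*} [AddCommGroup M] [Module ℝ M] (x : Fin N → M)
    (ℓ : Fin N) : M :=
  ((N : ℝ) + 1)⁻¹ • (∑ i, x i + x ℓ)

lemma dist_branchBarycenter_lt {x y : Fin N → E} {r : ℝ} (h : ∀ i, dist (x i) (y i) < r)
    (ℓ : Fin N) : dist (branchBarycenter x ℓ) (branchBarycenter y ℓ) < r := by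
  have hN : (0 : ℝ) < N + 1 := by positivity
  have hsum : dist (∑ i, x i + x ℓ) (∑ i, y i + y ℓ) < (N + 1) * r := by
    calc dist (∑ i, x i + x ℓ) (∑ i, y i + y ℓ)
        ≤ dist (∑ i, x i) (∑ i, y i) + dist (x ℓ) (y ℓ) := dist_add_add_le _ _ _ _
      _ < N * r + r := by
        refine add_lt_add_of_le_of_lt ?_ (h ℓ)
        simpa using dist_sum_sum_le_of_le univ fun i _ => (h i).le
      _ = (N + 1) * r := by ring
  rw [branchBarycenter, branchBarycenter, dist_smul₀, Real.norm_of_nonneg (by positivity),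
    inv_mul_lt_iff₀ hN]
  exact hsum

lemma branchBarycenter_smul_const (a : Fin N → ℝ) (v : E) (ℓ : Fin N) :
    branchBarycenter (fun i => a i • v) ℓ = branchBarycenter a ℓ • v := by
  simp only [branchBarycenter, ← sum_smul, ← add_smul, smul_smul, smul_eq_mul]

lemma mul_branchBarycenter (a : Fin N → ℝ) (ℓ : Fin N) :
    ((N : ℝ) + 1) * branchBarycenter a ℓ = ∑ i, a i + a ℓ := by
  rw [branchBarycenter, smul_eq_mul, ← mul_assoc, mul_inv_cancel₀ (by positivity), one_mul]

end Barycenter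

section Clusters

variable {ι : Type*} [DecidableEq ι]

def clusterCoord (G D : Finset ι) (γ₁ : ℝ) (i : ι) : ℝ :=
  if i ∈ G then -5 else if i ∈ D then 5 else γ₁

variable {G C D : Finset ι} {γ₁ : ℝ} {i : ι}

lemma clusterCoord_of_mem_left (hi : i ∈ G) : clusterCoord G D γ₁ i = -5 := if_pos hi

lemma clusterCoord_of_mem_right (hGD : Disjoint G D) (hi : i ∈ D) :
    clusterCoord G D γ₁ i = 5 := by
  rw [clusterCoord, if_neg (disjoint_right.mp hGD hi), if_pos hi]

lemma clusterCoord_of_mem_center (hGC : Disjoint G C) (hCD : Disjoint C D) (hi : i ∈ C) :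
    clusterCoord G D γ₁ i = γ₁ := by
  rw [clusterCoord, if_neg (disjoint_right.mp hGC hi), if_neg (disjoint_left.mp hCD hi)]

lemma sum_clusterCoord [Fintype ι] (hpart : G ∪ C ∪ D = univ) (hGC : Disjoint G C)
    (hGD : Disjoint G D) (hCD : Disjoint C D) :
    ∑ i, clusterCoord G D γ₁ i = 5 * #D - 5 * #G + #C * γ₁ := by
  rw [← hpart, sum_union (disjoint_union_left.mpr ⟨hGD, hCD⟩), sum_union hGC,
    sum_congr rfl fun i hi => clusterCoord_of_mem_left hi,
    sum_congr rfl fun i hi => clusterCoord_of_mem_center hGC hCD hi,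
    sum_congr rfl fun i hi => clusterCoord_of_mem_right hGD hi]
  simp only [sum_const, nsmul_eq_mul]
  ring

lemma dist_clusterCoord_smul_lt {E : Type*} [SeminormedAddCommGroup E] [NormedSpace ℝ E]
    {x : ι → E} {v : E} {r : ℝ} (hGC : Disjoint G C)
    (hGD : Disjoint G D) (hCD : Disjoint C D)
    (hC : ∀ i ∈ C, x i ∈ Metric.ball (γ₁ • v) r)
    (hG : ∀ i ∈ G, x i ∈ Metric.ball ((-5 : ℝ) • v) r)
    (hD : ∀ i ∈ D, x i ∈ Metric.ball ((5 : ℝ) • v) r) (hi : i ∈ G ∪ C ∪ D) :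
    dist (x i) (clusterCoord G D γ₁ i • v) < r := by
  simp only [mem_union] at hi
  rcases hi with (hiG | hiC) | hiD
  · rw [clusterCoord_of_mem_left hiG]; exact hG i hiG
  · rw [clusterCoord_of_mem_center hGC hCD hiC]; exact hC i hiC
  · rw [clusterCoord_of_mem_right hGD hiD]; exact hD i hiD

end Clusters

noncomputable def centralCoord (N : ℕ) : ℝ :=
  if N % 2 = 1 then 0 else -5 / ((N : ℝ) - 1)

lemma centralCoord_nonpos {N : ℕ} (hN : 0 < N) : centralCoord N ≤ 0 := by
  unfold centralCoord
  split_ifs with h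
  · rfl
  · have : (1 : ℝ) < N := by exact_mod_cast (show 1 < N by omega)
    exact div_nonpos_of_nonpos_of_nonneg (by norm_num) (by linarith)

lemma sub_one_mul_neg_centralCoord_le (N : ℕ) : ((N : ℝ) - 1) * -centralCoord N ≤ 5 := by
  unfold centralCoord
  split_ifs with h
  · norm_num
  · have : (N : ℝ) - 1 ≠ 0 := by
      rw [sub_ne_zero, Nat.cast_ne_one]; omega
    rw [neg_div, neg_neg, mul_div_cancel₀ _ this]

lemma abs_sub_add_le_five_sub {N g c dd : ℕ} {γ₁ μ : ℝ} (hsum : g + c + dd = N) (hc : 1 ≤ c)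
    (hdd : dd + 1 ≤ g + c) (hγ₁ : γ₁ ≤ 0) (hγ₁N : ((N : ℝ) - 1) * -γ₁ ≤ 5)
    (hμ : ((N : ℝ) + 1) * μ = 5 * dd - 5 * g + (c + 1) * γ₁) :
    |γ₁ - μ| + 2 / ((N : ℝ) + 1) ≤ 5 - μ := by
  have hsum' : (g : ℝ) + c + dd = N := by exact_mod_cast hsum
  have hc' : (1 : ℝ) ≤ c := by exact_mod_cast hc
  have hdd' : (dd : ℝ) + 1 ≤ g + c := by exact_mod_cast hdd
  have hN : (0 : ℝ) < N + 1 := by positivity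
  set t := 2 / ((N : ℝ) + 1)
  have ht : ((N : ℝ) + 1) * t = 2 := mul_div_cancel₀ _ hN.ne'
  have hgd : ((g : ℝ) + dd) * -γ₁ ≤ 5 := by nlinarith
  have hcγ : ((c : ℝ) + 1) * γ₁ ≤ 0 := mul_nonpos_of_nonneg_of_nonpos (by linarith) hγ₁
  have hμ5 : 2 * μ - γ₁ + t ≤ 5 := le_of_mul_le_mul_left (by nlinarith) hN
  rw [← le_sub_iff_add_le, abs_le]
  constructor <;> nlinarith

lemma abs_sub_add_le_add_five {N g c : ℕ} {γ₁ μ : ℝ} (hN : 3 ≤ N) (hsum : g + c = N)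
    (hgc : g ≤ c) (hγ₁N : ((N : ℝ) - 1) * -γ₁ ≤ 5)
    (hμ : ((N : ℝ) + 1) * μ = -5 * g + (c + 1) * γ₁) :
    |γ₁ - μ| + 2 / ((N : ℝ) + 1) ≤ μ + 5 := by
  have hsum' : (g : ℝ) + c = N := by exact_mod_cast hsum
  have hN' : (3 : ℝ) ≤ N := by exact_mod_cast hN
  have hgc' : (g : ℝ) ≤ c := by exact_mod_cast hgc
  set t := 2 / ((N : ℝ) + 1)
  have ht : ((N : ℝ) + 1) * t = 2 := mul_div_cancel₀ _ (by positivity)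
  have hγ₁5 : -γ₁ ≤ 5 / 2 := by nlinarith
  have hμ5 : γ₁ - 2 * μ + t ≤ 5 :=
    le_of_mul_le_mul_left
      (by nlinarith [mul_le_mul_of_nonneg_left hγ₁5 (by linarith : (0 : ℝ) ≤ c + 1 - g)])
      (by positivity : (0 : ℝ) < N + 1)
  rw [← le_sub_iff_add_le, abs_le]
  constructor <;> nlinarith

lemma exists_abs_clusterCoord_sub_branchBarycenter_ge {N : ℕ} (hN : 3 ≤ N)
    {G C D : Finset (Fin N)} (hpart : G ∪ C ∪ D = univ) (hGC : Disjoint G C)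
    (hGD : Disjoint G D) (hCD : Disjoint C D) (hGDne : (G ∪ D).Nonempty)
    (hcard1 : N / 2 + 1 ≤ #(G ∪ C)) (hcard2 : (N - 1) / 2 + 1 ≤ #(D ∪ C))
    {γ₁ : ℝ} (hγ₁ : γ₁ ≤ 0) (hγ₁N : ((N : ℝ) - 1) * -γ₁ ≤ 5) {ℓ : Fin N} (hℓ : ℓ ∈ C) :
    ∃ j, |γ₁ - branchBarycenter (clusterCoord G D γ₁) ℓ| + 2 / ((N : ℝ) + 1) ≤
      |clusterCoord G D γ₁ j - branchBarycenter (clusterCoord G D γ₁) ℓ| := by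
  set μ := branchBarycenter (clusterCoord G D γ₁) ℓ
  have hμ : ((N : ℝ) + 1) * μ = 5 * #D - 5 * #G + (#C + 1) * γ₁ := by
    rw [mul_branchBarycenter, sum_clusterCoord hpart hGC hGD hCD,
      clusterCoord_of_mem_center hGC hCD hℓ]
    ring
  have hsum : #G + #C + #D = N := by
    simpa only [card_union_of_disjoint (disjoint_union_left.mpr ⟨hGD, hCD⟩),
      card_union_of_disjoint hGC, card_univ, Fintype.card_fin] using congrArg card hpart
  rw [card_union_of_disjoint hGC] at hcard1
  rw [card_union_of_disjoint hCD.symm] at hcard2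
  have hC : 1 ≤ #C := card_pos.mpr ⟨ℓ, hℓ⟩
  rcases D.eq_empty_or_nonempty with hD | ⟨j, hjD⟩
  · obtain ⟨j, hjG⟩ : G.Nonempty := by simpa [hD] using hGDne
    refine ⟨j, ?_⟩
    rw [clusterCoord_of_mem_left hjG]
    have hμ' : ((N : ℝ) + 1) * μ = -5 * #G + (#C + 1) * γ₁ := by simpa [hD] using hμ
    have hGleC : #G ≤ #C := by simp only [hD, card_empty] at hcard2 hsum; omega
    calc |γ₁ - μ| + 2 / ((N : ℝ) + 1)
        ≤ μ + 5 := abs_sub_add_le_add_five hN (by simpa [hD] using hsum) hGleC hγ₁N hμ'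
      _ ≤ |-5 - μ| := by rw [abs_sub_comm, sub_neg_eq_add]; exact le_abs_self _
  · refine ⟨j, ?_⟩
    rw [clusterCoord_of_mem_right hGD hjD]
    exact (abs_sub_add_le_five_sub hsum hC (by omega) hγ₁ hγ₁N hμ).trans (le_abs_self _)

theorem stmt16_general {d N : ℕ} (hd : 0 < d) (hN : 3 ≤ N)
    (x : Fin N → EuclideanSpace ℝ (Fin d))
    (G C D : Finset (Fin N))
    (hpart : G ∪ C ∪ D = Finset.univ)
    (hGC : Disjoint G C) (hGD : Disjoint G D) (hCD : Disjoint C D)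
    (hGDne : (G ∪ D).Nonempty)
    (e1 γ : EuclideanSpace ℝ (Fin d))
    (he1 : e1 = EuclideanSpace.single (⟨0, hd⟩ : Fin d) (1 : ℝ))
    (hγ : γ = if N % 2 = 1 then 0 else (-5 / ((N : ℝ) - 1)) • e1)
    (rN : ℝ) (hrN : rN = 1 / (4 * ((N : ℝ) + 1)))
    (hC : ∀ i ∈ C, x i ∈ Metric.ball γ (2 * rN))
    (hG : ∀ j ∈ G, x j ∈ Metric.ball ((-5 : ℝ) • e1) (2 * rN))
    (hD : ∀ j ∈ D, x j ∈ Metric.ball ((5 : ℝ) • e1) (2 * rN))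
    (hcard1 : N / 2 + 1 ≤ (G ∪ C).card)
    (hcard2 : (N - 1) / 2 + 1 ≤ (D ∪ C).card) :
    ∀ ℓ ∈ C, ∀ j : Fin N,
      (∀ i : Fin N,
          ‖x i - ((N : ℝ) + 1)⁻¹ • ((∑ i', x i') + x ℓ)‖ ≤
            ‖x j - ((N : ℝ) + 1)⁻¹ • ((∑ i', x i') + x ℓ)‖) →
        j ∈ G ∪ D := by
  intro ℓ hℓ j hj
  by_contra hjGD
  have hjC : j ∈ C := by
    have hjm : j ∈ G ∪ C ∪ D := hpart ▸ mem_univ j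
    simp only [mem_union] at hjm hjGD
    tauto
  have he1n : ‖e1‖ = 1 := by simp [he1]
  have hγ₁ : γ = centralCoord N • e1 := by rw [hγ, centralCoord]; split_ifs <;> simp
  obtain ⟨j₀, hfar⟩ := exists_abs_clusterCoord_sub_branchBarycenter_ge hN hpart hGC hGD hCD
    hGDne hcard1 hcard2 (centralCoord_nonpos (by omega)) (sub_one_mul_neg_centralCoord_le N) hℓ
  set c := clusterCoord G D (centralCoord N)
  have hcj : c j = centralCoord N := clusterCoord_of_mem_center hGC hCD hjC
  have hclose (i : Fin N) : dist (x i) (c i • e1) < 2 * rN :=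
    dist_clusterCoord_smul_lt hGC hGD hCD (hγ₁ ▸ hC) hG hD (hpart ▸ mem_univ i)
  have hbary : dist (branchBarycenter x ℓ) (branchBarycenter c ℓ • e1) < 2 * rN := by
    rw [← branchBarycenter_smul_const]
    exact dist_branchBarycenter_lt hclose ℓ
  have h4rN : 4 * (2 * rN) = 2 / ((N : ℝ) + 1) := by rw [hrN]; field_simp
  refine (hj j₀).not_gt ?_
  rw [← dist_eq_norm, ← dist_eq_norm]
  refine dist_lt_dist_of_near (hclose j) (hclose j₀) hbary ?_
  rw [dist_smul_smul_right, dist_smul_smul_right, he1n, mul_one, mul_one, hcj, h4rN]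
  exact hfar

theorem stmt16 {d N : ℕ} (hd : 0 < d) (hN : 3 ≤ N)
    (x : Fin N → EuclideanSpace ℝ (Fin d))
    (G C D : Finset (Fin N))
    (hpart : G ∪ C ∪ D = Finset.univ)
    (hGC : Disjoint G C) (hGD : Disjoint G D) (hCD : Disjoint C D)
    (hCne : C.Nonempty) (hGDne : (G ∪ D).Nonempty)
    (e1 γ : EuclideanSpace ℝ (Fin d))
    (he1 : e1 = EuclideanSpace.single (⟨0, hd⟩ : Fin d) (1 : ℝ))
    (hγ : γ = if N % 2 = 1 then 0 else (-5 / ((N : ℝ) - 1)) • e1)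
    (rN : ℝ) (hrN : rN = 1 / (4 * ((N : ℝ) + 1)))
    (hC : ∀ i ∈ C, x i ∈ Metric.ball γ (2 * rN))
    (hG : ∀ j ∈ G, x j ∈ Metric.ball ((-5 : ℝ) • e1) (2 * rN))
    (hD : ∀ j ∈ D, x j ∈ Metric.ball ((5 : ℝ) • e1) (2 * rN))
    (hcard1 : N / 2 + 1 ≤ (G ∪ C).card)
    (hcard2 : (N - 1) / 2 + 1 ≤ (D ∪ C).card) :
    ∀ ℓ ∈ C, ∀ j : Fin N,
      (∀ i : Fin N,
          ‖x i - ((N : ℝ) + 1)⁻¹ • ((∑ i', x i') + x ℓ)‖ ≤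
            ‖x j - ((N : ℝ) + 1)⁻¹ • ((∑ i', x i') + x ℓ)‖) →
        j ∈ G ∪ D :=
  stmt16_general hd hN x G C D hpart hGC hGD hCD hGDne e1 γ he1 hγ rN hrN hC hG hD hcard1 hcard2
end

section
/- Suppose $N \ge 3$, $r_N = \frac{1}{4(N+1)}$, $D = \emptyset$, $|C| \ge \lfloor (N-1)/2 \rfloor + 1$, $|G| \le \lceil (N-1)/2 \rceil$, $|G|+|C|=N$, $x_i \in B(\gamma, 2r_N)$ for $i \in C$ and $x_j \in B(-5e_1, 2r_N)$ for $j \in G$ (with $\gamma$ as before, $G \neq \emptyset$). Then for $\ell \in C$ and $\bar{x}^{N+1} = \frac{1}{N+1}(\sum_i x_i + x_\ell)$, one has $\min_{i \in G} |x_i - \bar{x}^{N+1}| > \max_{j \in C} |x_j - \bar{x}^{N+1}|$. -/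
/-!
Compare the configuration with the one in which every particle of `C` sits at `γ` and every
particle of `G` at `-5 e₁`. There the barycenter `b₀` lies on the segment from `γ` to `-5 e₁`, at
relative distance `t = |G| / (N + 1) ≤ 1/2` from `γ`. Moving each particle by less than
`ρ = 2 r_N` moves the barycenter by at most `ρ`, so points of `C` are within `2ρ + t D` of the
barycenter and points of `G` at least `(1 - t) D - 2ρ` away, where `D = |γ + 5 e₁| ≥ 2`. Since
`(1 - 2t) D ≥ 2 / (N + 1) = 4ρ`, the second bound exceeds the first.
-/

open Finset AffineMap

section Barycenter

variable {E : Type*} [NormedAddCommGroup E] [NormedSpace ℝ E] {ι : Type*} [Fintype ι]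

/-- The paper's `x̄^{N+1}`: the barycenter after particle `ℓ` has branched into two. -/
noncomputable def branchedBarycenter (x : ι → E) (ℓ : ι) : E :=
  ((Fintype.card ι : ℝ) + 1)⁻¹ • (∑ i, x i + x ℓ)

theorem dist_branchedBarycenter_le {x z : ι → E} {ρ : ℝ} (h : ∀ k, dist (x k) (z k) ≤ ρ)
    (ℓ : ι) : dist (branchedBarycenter x ℓ) (branchedBarycenter z ℓ) ≤ ρ := by
  have hn : (0 : ℝ) < Fintype.card ι + 1 := by positivity
  have hsum : dist (∑ i, x i + x ℓ) (∑ i, z i + z ℓ) ≤ (Fintype.card ι + 1) * ρ :=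
    calc dist (∑ i, x i + x ℓ) (∑ i, z i + z ℓ)
        ≤ dist (∑ i, x i) (∑ i, z i) + dist (x ℓ) (z ℓ) := dist_add_add_le _ _ _ _
      _ ≤ ∑ _i : ι, ρ + ρ := add_le_add (dist_sum_sum_le_of_le _ fun k _ ↦ h k) (h ℓ)
      _ = (Fintype.card ι + 1) * ρ := by simp [card_univ]; ring
  rw [branchedBarycenter, branchedBarycenter, dist_smul₀, norm_inv, Real.norm_of_nonneg hn.le,
    inv_mul_le_iff₀ hn]
  exact hsum

theorem branchedBarycenter_ite [DecidableEq ι] (G : Finset ι) (a p : E) {ℓ : ι} (hℓ : ℓ ∉ G) :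
    branchedBarycenter (fun k ↦ if k ∈ G then p else a) ℓ =
      lineMap a p ((G.card : ℝ) / (Fintype.card ι + 1)) := by
  rw [branchedBarycenter, if_neg hℓ, lineMap_apply_module, sum_ite, filter_mem_eq_inter,
    univ_inter, filter_notMem_eq_sdiff, ← compl_eq_univ_sdiff, sum_const, sum_const, card_compl,
    ← Nat.cast_smul_eq_nsmul ℝ, ← Nat.cast_smul_eq_nsmul ℝ, Nat.cast_sub (card_le_univ G)]
  match_scalars <;> field_simp; ring

end Barycenter

theorem dist_lt_dist_of_dist_lineMap_le {E : Type*} [NormedAddCommGroup E] [NormedSpace ℝ E]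
    {a p b xi xj : E} {t ρ : ℝ} (ht : 0 ≤ t) (hb : dist b (lineMap a p t) ≤ ρ)
    (hj : dist xj a < ρ) (hi : dist xi p ≤ ρ) (hgap : 4 * ρ ≤ (1 - 2 * t) * dist a p) :
    dist xj b < dist xi b := by
  have ha : dist (lineMap a p t) a ≤ t * dist a p := by
    rw [dist_lineMap_left, Real.norm_of_nonneg ht]
  have hp : (1 - t) * dist a p ≤ dist (lineMap a p t) p := by
    rw [dist_lineMap_right]
    exact mul_le_mul_of_nonneg_right (Real.le_norm_self _) dist_nonneg
  have hj' := dist_triangle4 xj a (lineMap a p t) b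
  have hp' := dist_triangle4 (lineMap a p t) b xi p
  rw [dist_comm a] at hj'
  rw [dist_comm b xi] at hp'
  linarith [dist_comm b (lineMap a p t)]

theorem two_le_dist_gamma {E : Type*} [NormedAddCommGroup E] [NormedSpace ℝ E] {N : ℕ}
    (hN : 3 ≤ N) {e₁ : E} (he₁ : ‖e₁‖ = 1) :
    2 ≤ dist (if N % 2 = 1 then 0 else (-5 / ((N : ℝ) - 1)) • e₁) ((-5 : ℝ) • e₁) := by
  split_ifs
  · rw [dist_zero_left, norm_smul, he₁]
    norm_num
  · have hN4 : (4 : ℝ) ≤ N := by exact_mod_cast (by omega : 4 ≤ N)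
    have h5 : 5 / ((N : ℝ) - 1) ≤ 5 / 3 := div_le_div_of_nonneg_left (by norm_num) (by norm_num)
      (by linarith)
    rw [dist_eq_norm, ← sub_smul, norm_smul, he₁, mul_one, Real.norm_eq_abs, neg_div,
      abs_of_nonneg (by linarith)]
    linarith

theorem stmt17_general {d N : ℕ} (hd : 0 < d) (hN : 3 ≤ N)
    (x : Fin N → EuclideanSpace ℝ (Fin d))
    (G C : Finset (Fin N))
    (hpart : G ∪ C = Finset.univ) (hGC : Disjoint G C)
    (e1 γ : EuclideanSpace ℝ (Fin d))
    (he1 : e1 = EuclideanSpace.single (⟨0, hd⟩ : Fin d) (1 : ℝ))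
    (hγ : γ = if N % 2 = 1 then 0 else (-5 / ((N : ℝ) - 1)) • e1)
    (rN : ℝ) (hrN : rN = 1 / (4 * ((N : ℝ) + 1)))
    (hC : ∀ i ∈ C, x i ∈ Metric.ball γ (2 * rN))
    (hG : ∀ j ∈ G, x j ∈ Metric.ball ((-5 : ℝ) • e1) (2 * rN))
    (hcardG : G.card ≤ N / 2) :
    ∀ ℓ ∈ C, ∀ i ∈ G, ∀ j ∈ C,
      ‖x j - ((N : ℝ) + 1)⁻¹ • ((∑ i', x i') + x ℓ)‖ <
        ‖x i - ((N : ℝ) + 1)⁻¹ • ((∑ i', x i') + x ℓ)‖ := by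
  intro ℓ hℓ i hi j hj
  have hnear : ∀ k, dist (x k) (if k ∈ G then (-5 : ℝ) • e1 else γ) ≤ 2 * rN := fun k ↦ by
    split_ifs with hk
    · exact (hG k hk).le
    · have hk' : k ∈ G ∪ C := hpart ▸ mem_univ k
      exact (hC k ((mem_union.mp hk').resolve_left hk)).le
  have hb := dist_branchedBarycenter_le hnear ℓ
  rw [branchedBarycenter_ite G γ _ (disjoint_right.mp hGC hℓ)] at hb
  have hD : 2 ≤ dist γ ((-5 : ℝ) • e1) :=
    hγ ▸ two_le_dist_gamma hN (by simp [he1])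
  have hgap : 4 * (2 * rN) ≤ (1 - 2 * ((G.card : ℝ) / (Fintype.card (Fin N) + 1))) *
      dist γ ((-5 : ℝ) • e1) := by
    have h2G : 2 * (G.card : ℝ) ≤ N := by exact_mod_cast (by omega : 2 * G.card ≤ N)
    have hweight : 1 / ((N : ℝ) + 1) ≤ 1 - 2 * ((G.card : ℝ) / (N + 1)) := by
      rw [show 1 - 2 * ((G.card : ℝ) / (N + 1)) = (N + 1 - 2 * G.card) / (N + 1) by
        field_simp]
      gcongr
      linarith
    rw [Fintype.card_fin, hrN]
    calc 4 * (2 * (1 / (4 * ((N : ℝ) + 1)))) = 1 / (N + 1) * 2 := by field_simp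
      _ ≤ _ := mul_le_mul hweight hD zero_le_two (hweight.trans' (by positivity))
  simpa [branchedBarycenter, dist_eq_norm] using
    dist_lt_dist_of_dist_lineMap_le (by positivity) hb (hC j hj) (hG i hi).le hgap

theorem stmt17 {d N : ℕ} (hd : 0 < d) (hN : 3 ≤ N)
    (x : Fin N → EuclideanSpace ℝ (Fin d))
    (G C : Finset (Fin N))
    (hpart : G ∪ C = Finset.univ) (hGC : Disjoint G C)
    (hGne : G.Nonempty) (hCne : C.Nonempty)
    (e1 γ : EuclideanSpace ℝ (Fin d))
    (he1 : e1 = EuclideanSpace.single (⟨0, hd⟩ : Fin d) (1 : ℝ))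
    (hγ : γ = if N % 2 = 1 then 0 else (-5 / ((N : ℝ) - 1)) • e1)
    (rN : ℝ) (hrN : rN = 1 / (4 * ((N : ℝ) + 1)))
    (hC : ∀ i ∈ C, x i ∈ Metric.ball γ (2 * rN))
    (hG : ∀ j ∈ G, x j ∈ Metric.ball ((-5 : ℝ) • e1) (2 * rN))
    (hcardC : (N - 1) / 2 + 1 ≤ C.card)
    (hcardG : G.card ≤ N / 2)
    (hsum : G.card + C.card = N) :
    ∀ ℓ ∈ C, ∀ i ∈ G, ∀ j ∈ C,
      ‖x j - ((N : ℝ) + 1)⁻¹ • ((∑ i', x i') + x ℓ)‖ <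
        ‖x i - ((N : ℝ) + 1)⁻¹ • ((∑ i', x i') + x ℓ)‖ :=
  stmt17_general hd hN x G C hpart hGC e1 γ he1 hγ rN hrN hC hG hcardG
end
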